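/- Let K_n be the n×n lower Hessenberg matrix identical to H_n except that its (1,2) entry is -3 instead of -1; i.e., superdiagonal entries are -3, 1, -1, 1, -1, ..., main diagonal entries are all 2 except the last which is 1, second subdiagonal entries are all 1, and all other entries are 0. Then per K_n = L_{n-2}, the (n-2)nd Lucas number, for n ≥ 3. -/

import Mathlib

/-
Write `H_n(a)` for the Hessenberg matrix with superdiagonal `a`. Expanding its permanent along
the first column gives `per H_{m+3}(a) = 2 per H_{m+2}(a') + a₀ a₁ per H_m(a'')`, with `a'`, `a''`
the shifts of `a` by one and three places. When `aᵢ aᵢ₊₁ = -1` throughout this is the Fibonacci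
recurrence, so `per H_m(a) = F_{m+1}`. Since `K_n = H_n(a)` with `a₀ = -3`, `a₁ = 1`,
`per K_n = 2 F_n - 3 F_{n-2} = L_{n-2}`.
-/

open Finset Nat

def lucas : ℕ → ℕ
  | 0 => 2
  | 1 => 1
  | n + 2 => lucas (n + 1) + lucas n


def Kmat (n : ℕ) : Matrix (Fin n) (Fin n) ℤ := Matrix.of fun i j =>
  if (i : ℕ) = 0 ∧ (j : ℕ) = 1 then -3
  else if (j : ℕ) = (i : ℕ) + 1 then (-1) ^ ((i : ℕ) + 1)
  else if (i : ℕ) = (j : ℕ) then (if (i : ℕ) = n - 1 then 1 else 2)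
  else if (i : ℕ) = (j : ℕ) + 2 then 1 else 0

namespace Matrix

variable {R : Type*} [CommSemiring R] {n : ℕ}

theorem permanent_succ_column_zero (A : Matrix (Fin (n + 1)) (Fin (n + 1)) R) :
    A.permanent = ∑ i : Fin (n + 1), A i 0 * (A.submatrix i.succAbove Fin.succ).permanent := by
  rw [permanent, Finset.univ_perm_fin_succ, ← Finset.univ_product_univ]
  simp only [Finset.sum_map, Equiv.toEmbedding_apply, Finset.sum_product]
  refine Finset.sum_congr rfl fun i _ => Fin.cases ?_ (fun i => ?_) i
  · simp [Fin.prod_univ_succ, permanent, Finset.mul_sum,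
      Equiv.Perm.decomposeFin_symm_apply_zero, Equiv.Perm.decomposeFin_symm_apply_succ]
  · rw [← permanent_permute_cols (Fin.cycleRange i), permanent, Finset.mul_sum]
    refine Finset.sum_congr rfl fun σ _ => ?_
    simp [Fin.prod_univ_succ, Equiv.Perm.decomposeFin_symm_apply_zero,
      Equiv.Perm.decomposeFin_symm_apply_succ, Fin.succAbove_cycleRange]

theorem permanent_succ_row_zero (A : Matrix (Fin (n + 1)) (Fin (n + 1)) R) :
    A.permanent = ∑ j : Fin (n + 1), A 0 j * (A.submatrix Fin.succ j.succAbove).permanent := by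
  rw [← permanent_transpose, permanent_succ_column_zero]
  simp_rw [← permanent_transpose (A.submatrix _ _)]
  rfl

theorem permanent_succ_of_row_zero_eq_zero (A : Matrix (Fin (n + 1)) (Fin (n + 1)) R)
    (h : ∀ j ≠ 0, A 0 j = 0) :
    A.permanent = A 0 0 * (A.submatrix Fin.succ Fin.succ).permanent := by
  rw [permanent_succ_row_zero, Fintype.sum_eq_single 0 fun j hj => by rw [h j hj, zero_mul],
    Fin.succAbove_zero]

end Matrix

open Matrix

section FibHessenberg

variable {R : Type*} [CommSemiring R]

/-- The paper's `H_n` is `fibHessenberg (fun i => (-1) ^ (i + 1)) n`. -/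
def fibHessenberg (a : ℕ → R) (n : ℕ) : Matrix (Fin n) (Fin n) R := Matrix.of fun i j =>
  if (j : ℕ) = i + 1 then a i
  else if (i : ℕ) = j then (if (i : ℕ) = n - 1 then 1 else 2)
  else if (i : ℕ) = j + 2 then 1 else 0

theorem fibHessenberg_submatrix_of_val_add {k r n : ℕ} (a : ℕ → R) (hn : n = k + r)
    (f g : Fin k → Fin n) (hf : ∀ i, (f i : ℕ) = i + r) (hg : ∀ j, (g j : ℕ) = j + r) :
    (fibHessenberg a n).submatrix f g = fibHessenberg (fun i => a (i + r)) k := by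
  ext i j
  simp only [fibHessenberg, submatrix_apply, of_apply, hf, hg]
  subst hn
  split_ifs <;> first | rfl | omega

/-- Expand along the first column, whose nonzero entries sit in rows `0` and `2`; in the minor of
row `2` the first two rows each have a single nonzero entry, `a 0` and `a 1`. -/
theorem permanent_fibHessenberg_add_three (a : ℕ → R) (m : ℕ) :
    (fibHessenberg a (m + 3)).permanent =
      2 * (fibHessenberg (fun i => a (i + 1)) (m + 2)).permanent +
        a 0 * a 1 * (fibHessenberg (fun i => a (i + 3)) m).permanent := by
  set H := fibHessenberg a (m + 3)
  have hcol : ∀ i : Fin (m + 3), i ≠ 0 ∧ i ≠ 2 →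
      H i 0 * (H.submatrix i.succAbove Fin.succ).permanent = 0 := by
    rintro i ⟨hi0, hi2⟩
    have h0 : (i : ℕ) ≠ 0 := Fin.val_ne_of_ne hi0
    have h2 : (i : ℕ) ≠ 2 := Fin.val_ne_of_ne hi2
    have hzero : H i 0 = 0 := by simp [H, fibHessenberg, h0, h2]
    rw [hzero, zero_mul]
  have hH00 : H 0 0 = 2 := by simp [H, fibHessenberg]
  have hH20 : H 2 0 = 1 := by simp [H, fibHessenberg, Nat.mod_eq_of_lt]
  have hminor0 : H.submatrix (Fin.succAbove 0) Fin.succ =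
      fibHessenberg (fun i => a (i + 1)) (m + 2) :=
    fibHessenberg_submatrix_of_val_add a rfl _ _ (fun i => by simp) (fun i => by simp)
  have hminor2 : (H.submatrix (Fin.succAbove 2) Fin.succ).permanent =
      a 0 * a 1 * (fibHessenberg (fun i => a (i + 3)) m).permanent := by
    rw [permanent_succ_of_row_zero_eq_zero, permanent_succ_of_row_zero_eq_zero, submatrix_submatrix,
      submatrix_submatrix, fibHessenberg_submatrix_of_val_add a rfl _ _
        (fun i => by simp [Fin.succAbove, Fin.lt_def, Nat.mod_eq_of_lt]) (fun i => by simp)]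
    · simp [H, fibHessenberg, Fin.succAbove, Fin.lt_def, Nat.mod_eq_of_lt, mul_assoc]
    all_goals
      intro j hj
      simp [H, fibHessenberg, Fin.succAbove, Fin.lt_def, Nat.mod_eq_of_lt, hj]
  rw [permanent_succ_column_zero,
    Fintype.sum_eq_add 0 2 (by simp [Fin.ext_iff, Nat.mod_eq_of_lt]) hcol,
    hH00, hH20, hminor0, hminor2, one_mul]

end FibHessenberg

theorem permanent_fibHessenberg {R : Type*} [CommRing R] (a : ℕ → R)
    (ha : ∀ i, a i * a (i + 1) = -1) (n : ℕ) : (fibHessenberg a n).permanent = fib (n + 1) := by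
  induction n using Nat.strong_induction_on generalizing a with
  | _ n ih =>
    match n with
    | 0 => simp [permanent_isEmpty]
    | 1 => simp [permanent_unique, fibHessenberg]
    | 2 => simp [permanent_succ_column_zero, permanent_unique, fibHessenberg, fib_add_two]
    | k + 3 =>
      rw [permanent_fibHessenberg_add_three, ih (k + 2) (by omega) _ fun i => ha (i + 1),
        ih k (by omega) _ fun i => by simpa only [add_right_comm] using ha (i + 3), ha 0,
        fib_add_two (n := k + 2), fib_add_two (n := k + 1)]
      push_cast
      ring

theorem lucas_add_three_mul_fib : ∀ n, lucas n + 3 * fib n = 2 * fib (n + 2)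
  | 0 => rfl
  | 1 => rfl
  | n + 2 => by
    have h₀ := lucas_add_three_mul_fib n
    have h₁ := lucas_add_three_mul_fib (n + 1)
    simp only [lucas, fib_add_two] at *
    omega

theorem Kmat_eq_fibHessenberg (n : ℕ) :
    Kmat n = fibHessenberg (fun i => if i = 0 then -3 else (-1) ^ (i + 1)) n := by
  ext i j
  simp only [Kmat, fibHessenberg, of_apply]
  split_ifs <;> first | rfl | omega

theorem permanent_K (n : ℕ) (hn : 3 ≤ n) :
    Matrix.permanent (Kmat n) = (lucas (n - 2) : ℤ) := by
  obtain ⟨m, rfl⟩ : ∃ m, n = m + 3 := ⟨n - 3, by omega⟩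
  rw [Kmat_eq_fibHessenberg, permanent_fibHessenberg_add_three,
    permanent_fibHessenberg _ fun i => by simp [pow_succ, ← mul_pow],
    permanent_fibHessenberg _ fun i => by simp [pow_succ, ← mul_pow]]
  have hlucas : lucas (m + 1) + 3 * fib (m + 1) = 2 * fib (m + 2 + 1) :=
    lucas_add_three_mul_fib (m + 1)
  norm_num [show m + 3 - 2 = m + 1 by omega]
  omega
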